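/- arXiv:1809.07816 — 5 statements merged into one kernel-verified Lean document; each statement's English description precedes it below -/
import Mathlib

section
/- Let n ≥ 1, let h be a partial endomorphism of Z_{2n}, and let 0 ≤ m ≤ n. Then: (i) h is injective, its inverse h⁻¹ : image(h) → dom h is a partial endomorphism of Z_{2n}, and the converse of the graph of h is the graph of h⁻¹; (ii) the set h ∘ ≈_m := {(x,y) ∈ Z_{2n} × Z_{2n} : x ∈ dom h and h(x) ≈_m y} is a subalgebra of Z_{2n}², i.e. nonempty and closed under the coordinatewise operations ∧, ∨, ¬, →. -/
/-- Sugihara implication on the integers. -/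
def SImp (a b : ℤ) : ℤ := if a ≤ b then max (-a) b else min (-a) b

/-- The universe of the Sugihara algebra `Z_{2n+1}`. -/
def Zodd (n : ℕ) : Set ℤ := {a : ℤ | -(n : ℤ) ≤ a ∧ a ≤ (n : ℤ)}

/-- The universe of the Sugihara algebra `Z_{2n}`. -/
def Zeven (n : ℕ) : Set ℤ := {a : ℤ | (-(n : ℤ) ≤ a ∧ a ≤ (n : ℤ)) ∧ a ≠ 0}

/-- `S` is a subalgebra of (the subset `Z` of) the Sugihara algebra on `ℤ`. -/
def Subalg (Z S : Set ℤ) : Prop :=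
  S.Nonempty ∧ S ⊆ Z ∧
    ∀ a ∈ S, ∀ b ∈ S, min a b ∈ S ∧ max a b ∈ S ∧ -a ∈ S ∧ SImp a b ∈ S

/-- `h` is a homomorphism from `S` to `T` (preserving ∧, ∨, ¬, →). -/
def SHom (S T : Set ℤ) (h : ℤ → ℤ) : Prop :=
  Set.MapsTo h S T ∧
    ∀ a ∈ S, ∀ b ∈ S,
      h (min a b) = min (h a) (h b) ∧ h (max a b) = max (h a) (h b) ∧
      h (-a) = -h a ∧ h (SImp a b) = SImp (h a) (h b)

/-- `h` with domain `D` is a partial endomorphism of (the algebra on) `Z`. -/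
def PartialEnd (Z D : Set ℤ) (h : ℤ → ℤ) : Prop :=
  Subalg Z D ∧ Subalg Z (h '' D) ∧ SHom D (h '' D) h

/-- The relation `≈_m`. -/
def eqm (m : ℕ) (a b : ℤ) : Prop := a = b ∨ (|a| ≤ (m : ℤ) ∧ |b| ≤ (m : ℤ))

/-- `S` is a subalgebra of `Z²` (coordinatewise operations). -/
def Subalg2 (Z : Set ℤ) (S : Set (ℤ × ℤ)) : Prop :=
  S.Nonempty ∧ S ⊆ Z ×ˢ Z ∧
    ∀ p ∈ S, ∀ q ∈ S,
      (min p.1 q.1, min p.2 q.2) ∈ S ∧ (max p.1 q.1, max p.2 q.2) ∈ S ∧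
      (-p.1, -p.2) ∈ S ∧ (SImp p.1 q.1, SImp p.2 q.2) ∈ S

/-!
Since `a → b = ¬(b → a)` whenever `a ≠ b` while `a → a = |a|`, a homomorphism identifying
`a ≠ b` would send `a → b` both to `|h a|` and to `-|h a|`; this forces `h a = 0`, which is not
an element of `Z_{2n}`. So partial endomorphisms are injective and their inverses are again
partial endomorphisms. The relation `≈_m` is a congruence of the Sugihara operations, which
makes `h ∘ ≈_m` closed under them coordinatewise.
-/

open Set Function

def SClosed (S : Set ℤ) : Prop :=
  ∀ a ∈ S, ∀ b ∈ S, min a b ∈ S ∧ max a b ∈ S ∧ -a ∈ S ∧ SImp a b ∈ S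

def SCompatible (R : ℤ → ℤ → Prop) : Prop :=
  ∀ ⦃u v x y : ℤ⦄, R u x → R v y →
    R (min u v) (min x y) ∧ R (max u v) (max x y) ∧ R (-u) (-x) ∧ R (SImp u v) (SImp x y)

theorem SImp_self (a : ℤ) : SImp a a = |a| := by
  simp [SImp, abs_eq_max_neg, max_comm]

theorem neg_SImp_of_ne {a b : ℤ} (hab : a ≠ b) : -SImp a b = SImp b a := by
  unfold SImp
  split_ifs <;> omega

theorem sClosed_zeven (n : ℕ) : SClosed (Zeven n) := by
  intro x hx y hy
  simp only [Zeven, Set.mem_ofPred_eq, SImp] at *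
  refine ⟨by omega, by omega, by omega, ?_⟩
  split_ifs <;> omega

theorem zero_notMem_zeven (n : ℕ) : (0 : ℤ) ∉ Zeven n := fun h => h.2 rfl

theorem sCompatible_eqm (m : ℕ) : SCompatible (eqm m) := by
  intro u v x y hux hvy
  unfold eqm SImp at *
  simp only [abs_le] at *
  refine ⟨by omega, by omega, by omega, ?_⟩
  split_ifs <;> omega

namespace SHom

variable {D T : Set ℤ} {h : ℤ → ℤ}

theorem injOn_of_zero_notMem (hD : SClosed D) (hh : SHom D T h) (hT : (0 : ℤ) ∉ T) :
    InjOn h D := by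
  intro a ha b hb hab
  by_contra hne
  have habD : SImp a b ∈ D := (hD a ha b hb).2.2.2
  have habs : |h a| = -|h a| :=
    calc |h a| = h (SImp b a) := by rw [(hh.2 b hb a ha).2.2.2, hab, SImp_self]
      _ = h (-SImp a b) := by rw [neg_SImp_of_ne hne]
      _ = -h (SImp a b) := (hh.2 _ habD _ habD).2.2.1
      _ = -|h a| := by rw [(hh.2 a ha b hb).2.2.2, hab, SImp_self]
  have hzero : h a = 0 := abs_eq_zero.1 (by linarith)
  exact hT (hzero ▸ hh.1 ha)

theorem invFunOn (hD : SClosed D) (hh : SHom D T h) (hinj : InjOn h D) :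
    SHom (h '' D) D (invFunOn h D) := by
  refine ⟨fun b hb => invFunOn_mem hb, ?_⟩
  have hl := hinj.leftInvOn_invFunOn
  rintro _ ⟨a, ha, rfl⟩ _ ⟨b, hb, rfl⟩
  obtain ⟨hmin, hmax, hneg, himp⟩ := hh.2 a ha b hb
  obtain ⟨dmin, dmax, dneg, dimp⟩ := hD a ha b hb
  rw [hl ha, hl hb, ← hmin, ← hmax, ← hneg, ← himp, hl dmin, hl dmax, hl dneg, hl dimp]
  exact ⟨rfl, rfl, rfl, rfl⟩

end SHom

theorem PartialEnd.invFunOn {Z D : Set ℤ} {h : ℤ → ℤ} (hpe : PartialEnd Z D h)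
    (hinj : InjOn h D) : PartialEnd Z (h '' D) (invFunOn h D) := by
  obtain ⟨hD, hIm, hh⟩ := hpe
  unfold PartialEnd
  rw [hinj.invFunOn_image subset_rfl]
  exact ⟨hIm, hD, hh.invFunOn hD.2.2 hinj⟩

theorem Set.InjOn.image_swap_graph {α β : Type*} [Nonempty α] {f : α → β} {s : Set α}
    (hf : InjOn f s) :
    Prod.swap '' {p : α × β | p.1 ∈ s ∧ p.2 = f p.1} =
      {p : β × α | p.1 ∈ f '' s ∧ p.2 = invFunOn f s p.1} := by
  rw [image_swap_eq_preimage_swap]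
  ext ⟨y, x⟩
  simp only [mem_preimage, mem_ofPred_eq, Prod.swap_prod_mk]
  constructor
  · rintro ⟨hx, rfl⟩
    exact ⟨mem_image_of_mem f hx, (hf.leftInvOn_invFunOn hx).symm⟩
  · rintro ⟨hy, rfl⟩
    exact ⟨invFunOn_mem hy, (invFunOn_eq hy).symm⟩

theorem PartialEnd.subalg2_comp {Z D : Set ℤ} {h : ℤ → ℤ} {R : ℤ → ℤ → Prop}
    (hZ : SClosed Z) (hpe : PartialEnd Z D h) (hR : SCompatible R) (hrefl : ∀ a, R a a) :
    Subalg2 Z {p : ℤ × ℤ | p.1 ∈ Z ∧ p.2 ∈ Z ∧ p.1 ∈ D ∧ R (h p.1) p.2} := by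
  obtain ⟨hD, hIm, hh⟩ := hpe
  refine ⟨?_, fun p hp => ⟨hp.1, hp.2.1⟩, ?_⟩
  · obtain ⟨a, ha⟩ := hD.1
    exact ⟨(a, h a), hD.2.1 ha, hIm.2.1 (mem_image_of_mem h ha), ha, hrefl _⟩
  · rintro ⟨a, x⟩ ⟨-, hxZ, haD, hax⟩ ⟨b, y⟩ ⟨-, hyZ, hbD, hby⟩
    obtain ⟨dmin, dmax, dneg, dimp⟩ := hD.2.2 a haD b hbD
    obtain ⟨emin, emax, eneg, eimp⟩ := hh.2 a haD b hbD
    obtain ⟨rmin, rmax, rneg, rimp⟩ := hR hax hby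
    obtain ⟨zmin, zmax, zneg, zimp⟩ := hZ x hxZ y hyZ
    exact ⟨⟨hD.2.1 dmin, zmin, dmin, emin ▸ rmin⟩, ⟨hD.2.1 dmax, zmax, dmax, emax ▸ rmax⟩,
      ⟨hD.2.1 dneg, zneg, dneg, eneg ▸ rneg⟩, ⟨hD.2.1 dimp, zimp, dimp, eimp ▸ rimp⟩⟩

theorem stmt12_general (n m : ℕ)
    (D : Set ℤ) (h : ℤ → ℤ) (hpe : PartialEnd (Zeven n) D h) :
    (Set.InjOn h D ∧
      ∃ h' : ℤ → ℤ, PartialEnd (Zeven n) (h '' D) h' ∧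
        (∀ a ∈ D, h' (h a) = a) ∧ (∀ b ∈ h '' D, h (h' b) = b) ∧
        Prod.swap '' {p : ℤ × ℤ | p.1 ∈ D ∧ p.2 = h p.1} =
          {p : ℤ × ℤ | p.1 ∈ h '' D ∧ p.2 = h' p.1}) ∧
    Subalg2 (Zeven n)
      {p : ℤ × ℤ | p.1 ∈ Zeven n ∧ p.2 ∈ Zeven n ∧ p.1 ∈ D ∧ eqm m (h p.1) p.2} := by
  have hinj : InjOn h D :=
    hpe.2.2.injOn_of_zero_notMem hpe.1.2.2 fun h0 => zero_notMem_zeven n (hpe.2.1.2.1 h0)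
  refine ⟨⟨hinj, invFunOn h D, hpe.invFunOn hinj, fun a ha => hinj.leftInvOn_invFunOn ha,
    fun b hb => invFunOn_eq hb, hinj.image_swap_graph⟩, ?_⟩
  exact hpe.subalg2_comp (sClosed_zeven n) (sCompatible_eqm m) fun a => Or.inl rfl

theorem stmt12 (n m : ℕ) (hn : 1 ≤ n) (hm : m ≤ n)
    (D : Set ℤ) (h : ℤ → ℤ) (hpe : PartialEnd (Zeven n) D h) :
    (Set.InjOn h D ∧
      ∃ h' : ℤ → ℤ, PartialEnd (Zeven n) (h '' D) h' ∧
        (∀ a ∈ D, h' (h a) = a) ∧ (∀ b ∈ h '' D, h (h' b) = b) ∧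
        Prod.swap '' {p : ℤ × ℤ | p.1 ∈ D ∧ p.2 = h p.1} =
          {p : ℤ × ℤ | p.1 ∈ h '' D ∧ p.2 = h' p.1}) ∧
    Subalg2 (Zeven n)
      {p : ℤ × ℤ | p.1 ∈ Zeven n ∧ p.2 ∈ Zeven n ∧ p.1 ∈ D ∧ eqm m (h p.1) p.2} :=
  stmt12_general n m D h hpe
end

section
/- Let n ≥ 1. For G ⊆ Y, let the closure of G be the smallest subset C of Y containing G such that whenever 𝐮 ∈ C, e ∈ {f_0,…,f_n, g}, and every coordinate of 𝐮 lies in dom e, the coordinatewise image of 𝐮 under e lies in C. Then: (i) every 𝐮 ∈ Y whose first coordinate is positive lies in the closure of {𝐛_1,…,𝐛_n}; (ii) every 𝐮 ∈ Y whose first coordinate is 0 lies in the closure of {𝐛_{n+1}}. Consequently the closure of {𝐛_1,…,𝐛_{n+1}} is all of Y. -/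
/-- The endomorphism `g` of `Z_{2n+1}`, as a total function on `ℤ`. -/
def gOFun (a : ℤ) : ℤ := if 0 < a then a - 1 else if a < 0 then a + 1 else 0

/-- The underlying function of the partial endomorphism `f_i` of `Z_{2n+1}`. -/
def fOFun (i : ℕ) (a : ℤ) : ℤ :=
  if 2 ≤ i then
    (if a = (i : ℤ) - 1 then (i : ℤ) else if a = -((i : ℤ) - 1) then -(i : ℤ) else a)
  else a

/-- The domain of the partial endomorphism `f_i` of `Z_{2n+1}`. -/
def fODom (n i : ℕ) : Set ℤ := Zodd n \ {(i : ℤ), -(i : ℤ)}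

/-- The maps `f_0, …, f_n, g` on `Z_{2n+1}`, as pairs (domain, function). -/
def MapsOdd (n : ℕ) : Set (Set ℤ × (ℤ → ℤ)) :=
  {e | (∃ i : ℕ, i ≤ n ∧ e = (fODom n i, fOFun i)) ∨ e = (Zodd n, gOFun)}

/-- The test space `Y` for the odd case, as a set of `(n+1)`-tuples. -/
def YOdd (n : ℕ) : Set (Fin (n + 1) → ℤ) :=
  {u | (∀ i, u i ∈ Zodd n) ∧
    ∃ j : Fin (n + 1), 0 ≤ u j ∧ (∀ i, i ≤ j → u i = u j) ∧
      ∀ k l : Fin (n + 1), j ≤ k → k < l → u k < u l}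

/-- The tuples `𝐛_1, …, 𝐛_{n+1}` in `Y` (odd case); here `1 ≤ k ≤ n+1`. -/
def bOdd (n k : ℕ) : Fin (n + 1) → ℤ :=
  if k = n + 1 then fun p => ((p : ℕ) : ℤ)
  else fun p => max 1 (((p : ℕ) : ℤ) - ((n : ℤ) - (k : ℤ)))

/-- Membership in the closure of `G ⊆ Y` under the coordinatewise actions of
`f_0, …, f_n, g` (an action being defined at a tuple iff every coordinate lies in
the domain of the map). -/
inductive InClosureOdd (n : ℕ) (G : Set (Fin (n + 1) → ℤ)) : (Fin (n + 1) → ℤ) → Prop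
  | base {u : Fin (n + 1) → ℤ} : u ∈ G → InClosureOdd n G u
  | step {u : Fin (n + 1) → ℤ} (e : Set ℤ × (ℤ → ℤ)) :
      e ∈ MapsOdd n → InClosureOdd n G u → (∀ p, u p ∈ e.1) →
      InClosureOdd n G fun p => e.2 (u p)

/-! If a tuple `u ∈ Y` takes a value `a ≥ 2` but not `a - 1`, then replacing `a` by `a - 1`
gives a tuple of `Y` with smaller coordinate sum that `f_a` maps back to `u`. Descending this
way ends at a tuple whose values have no gaps, i.e. `u_p = u_0 + max 0 (p - t)` with
`u_0 ∈ {0, 1}`: for `u_0 = 1` this is `𝐛_{n+1-t}`, for `u_0 = 0` it is `g^t 𝐛_{n+1}`.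
Conversely `Y` contains the generators and is closed under the maps, since on the nonnegative
part of its domain `f_i` is strictly monotone, and `g` only identifies `0` and `1`, which
forces the first coordinate to be `0`. -/

open Finset

variable {n : ℕ}

theorem mem_YOdd_iff {u : Fin (n + 1) → ℤ} :
    u ∈ YOdd n ↔ (∀ p, u p ∈ Zodd n) ∧ 0 ≤ u 0 ∧
      ∀ k l : Fin (n + 1), k < l → u k < u l ∨ (u k = u 0 ∧ u l = u 0) := by
  constructor
  · rintro ⟨hZ, j, hj0, hconst, hstrict⟩
    have h0 : u 0 = u j := hconst 0 (Fin.zero_le j)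
    refine ⟨hZ, h0 ▸ hj0, fun k l hkl => ?_⟩
    rcases le_or_gt l j with hlj | hjl
    · exact .inr ⟨(hconst k (hkl.le.trans hlj)).trans h0.symm, (hconst l hlj).trans h0.symm⟩
    · rcases le_or_gt j k with hjk | hkj
      · exact .inl (hstrict k l hjk hkl)
      · exact .inl ((hconst k hkj.le).trans_lt (hstrict j l le_rfl hjl))
  · rintro ⟨hZ, h0, hord⟩
    set S := univ.filter fun i => u i = u 0
    set j := S.max' ⟨0, by simp [S]⟩
    have hj : u j = u 0 := (mem_filter.1 (S.max'_mem _)).2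
    have hle_j : ∀ i, u i = u 0 → i ≤ j := fun i hi => S.le_max' i (by simp [S, hi])
    refine ⟨hZ, j, hj ▸ h0, fun i hij => ?_, fun k l hjk hkl => ?_⟩
    · rcases hij.lt_or_eq with hij | rfl
      · rcases hord i j hij with h | h
        · rcases (Fin.zero_le i).lt_or_eq with h0i | rfl
          · rcases hord 0 i h0i with h' | h' <;> omega
          · omega
        · rw [h.1, hj]
      · rfl
    · rcases hord k l hkl with h | h
      · exact h
      · exact absurd (hle_j l h.2) (not_le.2 (hjk.trans_lt hkl))

theorem monotone_of_mem_YOdd {u : Fin (n + 1) → ℤ} (hu : u ∈ YOdd n) : Monotone u := by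
  intro k l hkl
  rcases hkl.lt_or_eq with hkl | rfl
  · rcases (mem_YOdd_iff.1 hu).2.2 k l hkl with h | h <;> omega
  · rfl

theorem nonneg_of_mem_YOdd {u : Fin (n + 1) → ℤ} (hu : u ∈ YOdd n) (p : Fin (n + 1)) :
    0 ≤ u p :=
  (mem_YOdd_iff.1 hu).2.1.trans (monotone_of_mem_YOdd hu (Fin.zero_le p))

theorem comp_mem_YOdd {u : Fin (n + 1) → ℤ} (hu : u ∈ YOdd n) {φ : ℤ → ℤ}
    (hZ : ∀ p, φ (u p) ∈ Zodd n) (h0 : 0 ≤ φ (u 0))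
    (hφ : ∀ k l, u k < u l → φ (u k) < φ (u l) ∨ (φ (u k) = φ (u 0) ∧ φ (u l) = φ (u 0))) :
    (fun p => φ (u p)) ∈ YOdd n := by
  refine mem_YOdd_iff.2 ⟨hZ, h0, fun k l hkl => ?_⟩
  rcases (mem_YOdd_iff.1 hu).2.2 k l hkl with h | ⟨hk, hl⟩
  · exact hφ k l h
  · exact .inr ⟨by rw [hk], by rw [hl]⟩

theorem mem_YOdd_of_mem_MapsOdd {u : Fin (n + 1) → ℤ} (hu : u ∈ YOdd n)
    {e : Set ℤ × (ℤ → ℤ)} (he : e ∈ MapsOdd n) (hdom : ∀ p, u p ∈ e.1) :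
    (fun p => e.2 (u p)) ∈ YOdd n := by
  have hnn := nonneg_of_mem_YOdd hu
  have hmono := monotone_of_mem_YOdd hu
  rcases he with ⟨i, hin, rfl⟩ | rfl
  · simp only [fODom, Zodd, Set.mem_sdiff, Set.mem_ofPred_eq, Set.mem_insert_iff,
      Set.mem_singleton_iff] at hdom
    have hf : ∀ p, fOFun i (u p) = u p ∨ (u p = i - 1 ∧ fOFun i (u p) = i ∧ 2 ≤ i) := by
      intro p
      have := hnn p
      unfold fOFun
      split_ifs <;> omega
    refine comp_mem_YOdd hu (fun p => ?_) ?_ (fun k l hkl => .inl ?_) <;> dsimp only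
    · have := hf p; have := hdom p; have := hnn p; exact ⟨by omega, by omega⟩
    · have := hf 0; have := hnn 0; omega
    · have := hf k; have := hf l; have := hdom k; have := hdom l; omega
  · have hg : ∀ p, gOFun (u p) = max 0 (u p - 1) := fun p => by
      have := hnn p; unfold gOFun; split_ifs <;> omega
    refine comp_mem_YOdd hu (fun p => ?_) ?_ (fun k l hkl => ?_) <;> dsimp only
    · have := hdom p; simp only [Zodd, Set.mem_ofPred_eq] at this ⊢; rw [hg]; omega
    · rw [hg]; omega
    · have := hmono (Fin.zero_le k); have := hnn 0
      simp only [hg]; omega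

theorem bOdd_mem_YOdd {k : ℕ} (hk1 : 1 ≤ k) (hk : k ≤ n + 1) : bOdd n k ∈ YOdd n := by
  refine mem_YOdd_iff.2 ⟨fun p => ?_, ?_, fun p q hpq => ?_⟩ <;>
    simp only [bOdd, Zodd, Set.mem_ofPred_eq, Fin.lt_def] at * <;> split_ifs <;> simp <;> omega

theorem InClosureOdd.mono {G G' : Set (Fin (n + 1) → ℤ)} (hGG' : G ⊆ G')
    {u : Fin (n + 1) → ℤ} (h : InClosureOdd n G u) : InClosureOdd n G' u := by
  induction h with
  | base hu => exact .base (hGG' hu)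
  | step e he _ hdom ih => exact .step e he ih hdom

theorem InClosureOdd.mem_YOdd {G : Set (Fin (n + 1) → ℤ)} (hG : G ⊆ YOdd n)
    {u : Fin (n + 1) → ℤ} (h : InClosureOdd n G u) : u ∈ YOdd n := by
  induction h with
  | base hu => exact hG hu
  | step e he _ hdom ih => exact mem_YOdd_of_mem_MapsOdd ih he hdom

def lowerValue {ι : Type*} (a : ℤ) (u : ι → ℤ) : ι → ℤ :=
  fun p => if u p = a then a - 1 else u p

theorem sum_lowerValue_lt {ι : Type*} [Fintype ι] {u : ι → ℤ} {a : ℤ} {p : ι} (hp : u p = a) :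
    ∑ q, lowerValue a u q < ∑ q, u q :=
  sum_lt_sum (fun q _ => by unfold lowerValue; split_ifs <;> omega)
    ⟨p, mem_univ p, by simp [lowerValue, hp]⟩

theorem lowerValue_mem_YOdd {u : Fin (n + 1) → ℤ} (hu : u ∈ YOdd n) {a : ℤ} (ha : 1 ≤ a)
    (hgap : ∀ p, u p ≠ a - 1) : lowerValue a u ∈ YOdd n := by
  have hnn := nonneg_of_mem_YOdd hu
  refine comp_mem_YOdd (φ := fun x => if x = a then a - 1 else x) hu (fun p => ?_) ?_
    (fun k l hkl => .inl ?_)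
  · have := hnn p; have := hu.1 p; simp only [Zodd, Set.mem_ofPred_eq] at *; split_ifs <;> omega
  · have := hnn 0; split_ifs <;> omega
  · have := hgap k; have := hgap l; split_ifs <;> omega

theorem InClosureOdd.of_lowerValue {G : Set (Fin (n + 1) → ℤ)} {u : Fin (n + 1) → ℤ} {i : ℕ}
    (hi : 2 ≤ i) (hin : i ≤ n) (hu : ∀ p, u p ∈ Zodd n) (hnn : ∀ p, 0 ≤ u p)
    (hgap : ∀ p, u p ≠ i - 1) (h : InClosureOdd n G (lowerValue i u)) : InClosureOdd n G u := by
  have hdom : ∀ p, lowerValue i u p ∈ fODom n i := fun p => by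
    have := hu p; have := hnn p
    simp only [lowerValue, fODom, Zodd, Set.mem_sdiff, Set.mem_ofPred_eq, Set.mem_insert_iff,
      Set.mem_singleton_iff] at *
    split_ifs <;> omega
  have hf : u = fun p => fOFun i (lowerValue i u p) := funext fun p => by
    have := hgap p; have := hnn p
    simp only [lowerValue, fOFun, if_pos hi]
    split_ifs <;> omega
  rw [hf]
  exact .step (fODom n i, fOFun i) (.inl ⟨i, hin, rfl⟩) h hdom

def NoGaps {ι : Type*} (u : ι → ℤ) : Prop :=
  ∀ p, 2 ≤ u p → ∃ q, u q = u p - 1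

theorem inClosureOdd_of_noGaps {G : Set (Fin (n + 1) → ℤ)} {P : (Fin (n + 1) → ℤ) → Prop}
    (hP : ∀ u a, 2 ≤ a → P u → P (lowerValue a u))
    (hbase : ∀ u ∈ YOdd n, P u → NoGaps u → InClosureOdd n G u)
    {u : Fin (n + 1) → ℤ} (hu : u ∈ YOdd n) (hPu : P u) : InClosureOdd n G u := by
  induction hN : (∑ p, u p).toNat using Nat.strong_induction_on generalizing u with
  | _ N ih =>
  by_cases hgaps : NoGaps u
  · exact hbase u hu hPu hgaps
  obtain ⟨p, hp2, hgap⟩ : ∃ p, 2 ≤ u p ∧ ∀ q, u q ≠ u p - 1 := by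
    simpa [NoGaps] using hgaps
  have hnn := nonneg_of_mem_YOdd hu
  obtain ⟨i, hi⟩ : ∃ i : ℕ, u p = i := ⟨(u p).toNat, (Int.toNat_of_nonneg (hnn p)).symm⟩
  rw [hi] at hp2 hgap
  have hv := lowerValue_mem_YOdd hu (by omega) hgap
  have hlt := sum_lowerValue_lt hi
  have hv_nn : 0 ≤ ∑ q, lowerValue i u q := sum_nonneg fun q _ => nonneg_of_mem_YOdd hv q
  exact .of_lowerValue (by omega) (by have := (hu.1 p).2; omega) hu.1 hnn hgap
    (ih _ (by omega) hv (hP _ _ hp2 hPu) rfl)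

theorem apply_zero_le_one_of_noGaps {u : Fin (n + 1) → ℤ} (hu : u ∈ YOdd n)
    (hgaps : NoGaps u) : u 0 ≤ 1 := by
  by_contra h
  obtain ⟨q, hq⟩ := hgaps 0 (by omega)
  have := monotone_of_mem_YOdd hu (Fin.zero_le q)
  omega

theorem apply_succ_le_of_noGaps {u : Fin (n + 1) → ℤ} (hu : u ∈ YOdd n)
    (hgaps : NoGaps u) (i : Fin n) : u i.succ ≤ u i.castSucc + 1 := by
  have hmono := monotone_of_mem_YOdd hu
  by_contra h
  obtain ⟨q, hq⟩ := hgaps i.succ (by have := nonneg_of_mem_YOdd hu i.castSucc; omega)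
  rcases le_or_gt q i.castSucc with hqi | hiq
  · have := hmono hqi; omega
  · have := hmono (Fin.castSucc_lt_iff_succ_le.1 hiq); omega

theorem exists_eq_add_max_of_noGaps {u : Fin (n + 1) → ℤ} (hu : u ∈ YOdd n)
    (hgaps : NoGaps u) :
    ∃ t : Fin (n + 1), u = fun p : Fin (n + 1) => u 0 + max 0 ((p : ℕ) - (t : ℕ) : ℤ) := by
  obtain ⟨-, j, -, hconst, hstrict⟩ := id hu
  refine ⟨j, funext fun p => ?_⟩
  induction p using Fin.induction with
  | zero => simp
  | succ i ih =>
    have hle := apply_succ_le_of_noGaps hu hgaps i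
    rcases le_or_gt i.succ j with h | h
    · have : (i.succ : ℕ) ≤ j := h
      rw [hconst _ h, ← hconst 0 (Fin.zero_le j)]
      omega
    · have hlt := hstrict i.castSucc i.succ (Fin.le_castSucc_iff.2 h) i.castSucc_lt_succ
      have : (j : ℕ) < i.succ := h
      simp only [Fin.val_succ, Fin.val_castSucc] at *
      omega

theorem bOdd_eq_one_add_max {t : ℕ} (ht : 1 ≤ t) (htn : t ≤ n) :
    bOdd n (n + 1 - t) = fun p : Fin (n + 1) => 1 + max 0 ((p : ℕ) - t : ℤ) := by
  funext p
  rw [bOdd, if_neg (by omega)]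
  omega

theorem inClosureOdd_max_sub (t : ℕ) :
    InClosureOdd n {bOdd n (n + 1)} fun p : Fin (n + 1) => max 0 ((p : ℕ) - t : ℤ) := by
  induction t with
  | zero => exact .base (funext fun p => by simp [bOdd])
  | succ t ih =>
    have hdom : ∀ p : Fin (n + 1), max 0 ((p : ℕ) - t : ℤ) ∈ Zodd n := fun p =>
      ⟨by omega, by have := p.isLt; omega⟩
    convert InClosureOdd.step (Zodd n, gOFun) (.inr rfl) ih hdom using 2 with p
    simp only [gOFun]
    split_ifs <;> omega

theorem inClosureOdd_of_pos {u : Fin (n + 1) → ℤ} (hu : u ∈ YOdd n) (h0 : 0 < u 0) :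
    InClosureOdd n {v | ∃ k : ℕ, 1 ≤ k ∧ k ≤ n ∧ v = bOdd n k} u := by
  refine inClosureOdd_of_noGaps (P := fun v => 0 < v 0) (fun v a ha hv => ?_)
    (fun v hv hv0 hgaps => ?_) hu h0
  · simp only [lowerValue]; split_ifs <;> omega
  have h1 : v 0 = 1 := le_antisymm (apply_zero_le_one_of_noGaps hv hgaps) hv0
  obtain ⟨t, ht⟩ := exists_eq_add_max_of_noGaps hv hgaps
  have htn := Nat.lt_succ_iff.1 t.isLt
  have ht1 : 1 ≤ (t : ℕ) := by
    have := (hv.1 (Fin.last n)).2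
    rw [ht, h1] at this
    simp only [Fin.val_last] at this
    omega
  refine .base ⟨n + 1 - t, by omega, by omega, ?_⟩
  rw [bOdd_eq_one_add_max ht1 htn, ht, h1]

theorem inClosureOdd_of_eq_zero {u : Fin (n + 1) → ℤ} (hu : u ∈ YOdd n) (h0 : u 0 = 0) :
    InClosureOdd n {bOdd n (n + 1)} u := by
  refine inClosureOdd_of_noGaps (P := fun v => v 0 = 0) (fun v a ha hv => ?_)
    (fun v hv hv0 hgaps => ?_) hu h0
  · simp only [lowerValue]; split_ifs <;> omega
  obtain ⟨t, ht⟩ := exists_eq_add_max_of_noGaps hv hgaps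
  rw [ht, hv0]
  simpa using inClosureOdd_max_sub (n := n) t

theorem stmt14_general (n : ℕ) :
    (∀ u ∈ YOdd n, 0 < u 0 →
      InClosureOdd n {v | ∃ k : ℕ, 1 ≤ k ∧ k ≤ n ∧ v = bOdd n k} u) ∧
    (∀ u ∈ YOdd n, u 0 = 0 → InClosureOdd n {bOdd n (n + 1)} u) ∧
    (∀ u ∈ YOdd n, InClosureOdd n {v | ∃ k : ℕ, 1 ≤ k ∧ k ≤ n + 1 ∧ v = bOdd n k} u) ∧
    (∀ u, InClosureOdd n {v | ∃ k : ℕ, 1 ≤ k ∧ k ≤ n + 1 ∧ v = bOdd n k} u → u ∈ YOdd n) := by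
  refine ⟨fun u => inClosureOdd_of_pos, fun u => inClosureOdd_of_eq_zero, fun u hu => ?_,
    fun u => InClosureOdd.mem_YOdd ?_⟩
  · rcases (nonneg_of_mem_YOdd hu 0).lt_or_eq with h0 | h0
    · refine (inClosureOdd_of_pos hu h0).mono ?_
      rintro v ⟨k, hk1, hk, rfl⟩
      exact ⟨k, hk1, by omega, rfl⟩
    · refine (inClosureOdd_of_eq_zero hu h0.symm).mono ?_
      rintro v rfl
      exact ⟨n + 1, by omega, le_rfl, rfl⟩
  · rintro v ⟨k, hk1, hk, rfl⟩
    exact bOdd_mem_YOdd hk1 hk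

theorem stmt14 (n : ℕ) (hn : 1 ≤ n) :
    (∀ u ∈ YOdd n, 0 < u 0 →
      InClosureOdd n {v | ∃ k : ℕ, 1 ≤ k ∧ k ≤ n ∧ v = bOdd n k} u) ∧
    (∀ u ∈ YOdd n, u 0 = 0 → InClosureOdd n {bOdd n (n + 1)} u) ∧
    (∀ u ∈ YOdd n, InClosureOdd n {v | ∃ k : ℕ, 1 ≤ k ∧ k ≤ n + 1 ∧ v = bOdd n k} u) ∧
    (∀ u, InClosureOdd n {v | ∃ k : ℕ, 1 ≤ k ∧ k ≤ n + 1 ∧ v = bOdd n k} u → u ∈ YOdd n) :=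
  stmt14_general n
end

section
/- Let n ≥ 1 and suppose φ : Y → Y satisfies: for each e ∈ {f_2,…,f_n, g} and each 𝐮 ∈ Y all of whose coordinates lie in dom e, all coordinates of φ(𝐮) lie in dom e and φ(e·𝐮) = e·φ(𝐮) (coordinatewise action); and for each m with 1 ≤ m ≤ n−1, whenever 𝐮, 𝐯 ∈ Y satisfy u_i ≈_m v_i for all i, the tuples φ(𝐮) and φ(𝐯) satisfy φ(𝐮)_i ≈_m φ(𝐯)_i for all i. If (1,2,…,n) lies in the image of φ, then φ is the identity map on Y. -/
/-- The underlying function of the partial endomorphism `g` of `Z_{2n}`. -/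
def gEFun (a : ℤ) : ℤ := if 0 < a then a - 1 else a + 1

/-- The underlying function of the partial endomorphism `f_i` of `Z_{2n}` (for `2 ≤ i ≤ n`). -/
def fEFun (i : ℕ) (a : ℤ) : ℤ :=
  if a = (i : ℤ) - 1 then (i : ℤ) else if a = -((i : ℤ) - 1) then -(i : ℤ) else a

/-- The maps `f_2, …, f_n, g` on `Z_{2n}`, as pairs (domain, function). -/
def MapsEven (n : ℕ) : Set (Set ℤ × (ℤ → ℤ)) :=
  {e | (∃ i : ℕ, 2 ≤ i ∧ i ≤ n ∧ e = (Zeven n \ {(i : ℤ), -(i : ℤ)}, fEFun i)) ∨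
    e = (Zeven n \ {1, -1}, gEFun)}

/-- The test space `Y` for the even case, as a set of `n`-tuples. -/
def YEven (n : ℕ) : Set (Fin n → ℤ) :=
  {u | (∀ i, u i ∈ Zeven n) ∧
    ∃ j : Fin n, 0 < u j ∧ (∀ i, i ≤ j → u i = u j) ∧
      ∀ k l : Fin n, j ≤ k → k < l → u k < u l}

/-- The tuples `𝐛_1, …, 𝐛_n` in `Y` (even case); here `1 ≤ k ≤ n`. -/
def bEven (n k : ℕ) : Fin n → ℤ :=
  fun p => max 1 (((p : ℕ) : ℤ) + 1 - ((n : ℤ) - (k : ℤ)))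


/-!
If `u` omits a value `s`, then `u` lies in the domain of `f_s` (or of `g` when `s = 1`), hence
so does `φ u`: thus `range (φ u) ⊆ range u`. Applied to a preimage of `(1, …, n)`, whose range
must then be all of `{1, …, n}`, this gives `φ (1, …, n) = (1, …, n)`. The tuples
`(a, …, a, a + 1, …, n)` are then fixed by induction on `a`: the one for `a + 1` is
`≈_{a+1}`-related to the fixed one for `a`, which pins the coordinates of its image above `a + 1`
and bounds the others by `a + 1`, while the range inclusion bounds them below by `a + 1`.
Any other tuple of `Y` has a gap (it takes the value `i - 1` but not `i`) and `f_i` moves it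
strictly upwards while staying injective on its values, so `φ u = u` follows by induction on
`∑ (n - u_p)`.
-/

variable {n : ℕ}

theorem mem_YEven_of_forall {u : Fin n → ℤ} (hval : ∀ p, 1 ≤ u p ∧ u p ≤ n) (j : Fin n)
    (hpre : ∀ p ≤ j, u p = u j) (htail : ∀ p q, j ≤ p → p < q → u p < u q) :
    u ∈ YEven n :=
  ⟨fun p => ⟨⟨by linarith [(hval p).1], (hval p).2⟩, by linarith [(hval p).1]⟩,
    j, by linarith [(hval j).1], hpre, htail⟩

namespace YEven

variable {u : Fin n → ℤ}

theorem one_le_apply (hu : u ∈ YEven n) (p : Fin n) : 1 ≤ u p := by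
  obtain ⟨-, j, hj, hpre, htail⟩ := hu
  rcases le_or_gt p j with hp | hp
  · rw [hpre p hp]; omega
  · linarith [htail j p le_rfl hp]

theorem apply_le (hu : u ∈ YEven n) (p : Fin n) : u p ≤ n :=
  (hu.1 p).1.2

theorem monotone (hu : u ∈ YEven n) : Monotone u := by
  obtain ⟨-, j, -, hpre, htail⟩ := hu
  intro p q hpq
  rcases hpq.eq_or_lt with rfl | hpq
  · rfl
  rcases le_or_gt q j with hq | hq
  · rw [hpre p (hpq.le.trans hq), hpre q hq]
  rcases le_or_gt p j with hp | hp
  · rw [hpre p hp]; exact (htail j q le_rfl hq).le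
  · exact (htail p q hp.le hpq).le

theorem mem_diff (hu : u ∈ YEven n) {s : ℕ} (hs : (s : ℤ) ∉ Set.range u)
    (p : Fin n) : u p ∈ Zeven n \ {(s : ℤ), -(s : ℤ)} := by
  have := one_le_apply hu p
  refine ⟨hu.1 p, ?_⟩
  simp only [Set.mem_insert_iff, Set.mem_singleton_iff, not_or]
  exact ⟨fun h => hs ⟨p, h⟩, by omega⟩

end YEven

/-- `stair n a = (a, …, a, a + 1, …, n)`. -/
def stair (n a : ℕ) : Fin n → ℤ := fun p => max (a : ℤ) ((p : ℕ) + 1)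

theorem stair_mem_YEven {a : ℕ} (ha : 1 ≤ a) (han : a ≤ n) : stair n a ∈ YEven n := by
  refine mem_YEven_of_forall (fun p => ?_) ⟨a - 1, by omega⟩ (fun p hp => ?_)
    (fun p q hp hpq => ?_)
  · have := p.isLt; simp only [stair]; omega
  · have := Fin.le_def.mp hp; simp only [stair] at *; omega
  · have := Fin.le_def.mp hp; have := Fin.lt_def.mp hpq; simp only [stair] at *; omega

theorem bEven_self : bEven n n = stair n 1 := by
  funext p; simp [bEven, stair]

theorem YEven.exists_eq_stair {u : Fin n → ℤ} (hu : u ∈ YEven n)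
    (hclosed : ∀ i : ℕ, i ≤ n → (i : ℤ) - 1 ∈ Set.range u →
      (i : ℤ) ∈ Set.range u) :
    ∃ a, 1 ≤ a ∧ a ≤ n ∧ u = stair n a := by
  have hmono := YEven.monotone hu
  have hval : ∀ p, 1 ≤ u p ∧ u p ≤ n := fun p =>
    ⟨YEven.one_le_apply hu p, YEven.apply_le hu p⟩
  have hnext : ∀ p, u p < n → ∃ q, p < q ∧ u q = u p + 1 := by
    intro p hp
    obtain ⟨q, hq⟩ := hclosed (u p + 1).toNat (by omega) ⟨p, by have := hval p; omega⟩
    refine ⟨q, lt_of_not_ge fun hqp => ?_, by have := hval p; omega⟩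
    have := hmono hqp; have := hval p; omega
  obtain ⟨-, j, -, hpre, htail⟩ := hu
  have htop : ∀ d : ℕ, ∀ p : Fin n, j ≤ p → (p : ℕ) + d + 1 = n →
      u p = (p : ℕ) + 1 := by
    intro d
    induction d with
    | zero =>
      intro p _ hp
      by_contra hne
      obtain ⟨q, hpq, -⟩ := hnext p (by have := hval p; omega)
      have := Fin.lt_def.mp hpq; omega
    | succ d ih =>
      intro p hjp hp
      obtain ⟨q, hq⟩ : ∃ q : Fin n, (q : ℕ) = p + 1 := ⟨⟨p + 1, by omega⟩, rfl⟩
      have hpq : p < q := Fin.lt_def.mpr (by omega)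
      have huq := ih q (hjp.trans hpq.le) (by omega)
      have := htail p q hjp hpq
      by_contra hne
      obtain ⟨r, hpr, hr⟩ := hnext p (by omega)
      have := hmono (show q ≤ r from Fin.le_def.mpr (by have := Fin.lt_def.mp hpr; omega))
      omega
  refine ⟨j + 1, by omega, j.isLt, funext fun p => ?_⟩
  have hj := htop (n - 1 - j) j le_rfl (by omega)
  rcases le_or_gt p j with hp | hp
  · have := Fin.le_def.mp hp; rw [hpre p hp, hj]; simp only [stair]; omega
  · have := Fin.lt_def.mp hp; rw [htop (n - 1 - p) p hp.le (by omega)]; simp only [stair]; omega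

theorem strictMonoOn_fEFun (i : ℕ) : StrictMonoOn (fEFun i) {z | 0 < z ∧ z ≠ i} := by
  rintro z ⟨hz, hzi⟩ z' ⟨hz', hzi'⟩ h
  unfold fEFun
  split_ifs <;> omega

theorem YEven.comp_fEFun {u : Fin n → ℤ} (hu : u ∈ YEven n) {i : ℕ} (hi : 2 ≤ i)
    (hin : i ≤ n) (hui : (i : ℤ) ∉ Set.range u) : fEFun i ∘ u ∈ YEven n := by
  have hdom : ∀ p, u p ∈ {z | 0 < z ∧ z ≠ (i : ℤ)} := fun p =>
    ⟨by linarith [YEven.one_le_apply hu p], fun h => hui ⟨p, h⟩⟩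
  have hval : ∀ p, 1 ≤ u p ∧ u p ≤ n := fun p =>
    ⟨YEven.one_le_apply hu p, YEven.apply_le hu p⟩
  obtain ⟨-, j, -, hpre, htail⟩ := hu
  refine mem_YEven_of_forall (fun p => ?_) j (fun p hp => ?_) (fun p q hp hpq => ?_)
  · have := hval p; have := (hdom p).2
    simp only [Function.comp_apply, fEFun]; split_ifs <;> omega
  · simp only [Function.comp_apply, hpre p hp]
  · exact strictMonoOn_fEFun i (hdom p) (hdom q) (htail p q hp hpq)

theorem exists_mem_MapsEven {s : ℕ} (hs : 1 ≤ s) (hsn : s ≤ n) :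
    ∃ F, (Zeven n \ {(s : ℤ), -(s : ℤ)}, F) ∈ MapsEven n := by
  rcases hs.eq_or_lt with rfl | hs
  · exact ⟨gEFun, Or.inr (by simp)⟩
  · exact ⟨fEFun s, Or.inl ⟨s, hs, hsn, rfl⟩⟩

section Equivariant

variable (φ : (Fin n → ℤ) → (Fin n → ℤ))
  (hmap : ∀ u ∈ YEven n, φ u ∈ YEven n)
  (hpres : ∀ e ∈ MapsEven n, ∀ u ∈ YEven n, (∀ p, u p ∈ e.1) →
    (∀ p, φ u p ∈ e.1) ∧ φ (fun p => e.2 (u p)) = fun p => e.2 (φ u p))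
  (hrel : ∀ m : ℕ, 1 ≤ m → m ≤ n - 1 → ∀ u ∈ YEven n, ∀ v ∈ YEven n,
    (∀ i, eqm m (u i) (v i)) → ∀ i, eqm m (φ u i) (φ v i))

include hmap hpres

theorem range_apply_subset {u : Fin n → ℤ} (hu : u ∈ YEven n) :
    Set.range (φ u) ⊆ Set.range u := by
  rintro _ ⟨p, rfl⟩
  by_contra hs
  have := YEven.one_le_apply (hmap u hu) p
  have := YEven.apply_le (hmap u hu) p
  obtain ⟨s, hsp⟩ : ∃ s : ℕ, φ u p = s := ⟨(φ u p).toNat, by omega⟩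
  rw [hsp] at hs
  obtain ⟨F, hF⟩ := exists_mem_MapsEven (n := n) (s := s) (by omega) (by omega)
  have := ((hpres _ hF u hu (YEven.mem_diff hu hs)).1 p).2
  simp [hsp] at this

theorem apply_eq_of_apply_comp_fEFun {u : Fin n → ℤ} (hu : u ∈ YEven n) {i : ℕ}
    (hi : 2 ≤ i) (hin : i ≤ n) (hui : (i : ℤ) ∉ Set.range u)
    (h : φ (fEFun i ∘ u) = fEFun i ∘ u) : φ u = u := by
  have hcomm := (hpres _ (Or.inl ⟨i, hi, hin, rfl⟩) u hu (YEven.mem_diff hu hui)).2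
  have hφi : (i : ℤ) ∉ Set.range (φ u) := fun h => hui (range_apply_subset φ hmap hpres hu h)
  funext p
  refine (strictMonoOn_fEFun i).injOn ⟨?_, fun h => hφi ⟨p, h⟩⟩
    ⟨?_, fun h => hui ⟨p, h⟩⟩ ((congrFun hcomm p).symm.trans (congrFun h p))
  · linarith [YEven.one_le_apply (hmap u hu) p]
  · linarith [YEven.one_le_apply hu p]

theorem apply_stair_one (hsurj : ∃ u ∈ YEven n, φ u = stair n 1) :
    φ (stair n 1) = stair n 1 := by
  obtain ⟨w, hw, hφw⟩ := hsurj
  have hsub : Set.range (stair n 1) ⊆ Set.range w := hφw ▸ range_apply_subset φ hmap hpres hw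
  obtain ⟨a, ha, han, rfl⟩ := YEven.exists_eq_stair hw fun i hin ⟨p, hp⟩ => hsub
    ⟨⟨i - 1, by have := p.isLt; omega⟩,
      by have := YEven.one_le_apply hw p; simp only [stair]; omega⟩
  obtain ⟨p, hp⟩ := hsub ⟨⟨0, by omega⟩, rfl⟩
  obtain rfl : a = 1 := by simp only [stair] at hp; omega
  exact hφw

theorem apply_stair_top (hn : 1 ≤ n) : φ (stair n n) = stair n n := by
  funext p
  obtain ⟨q, hq⟩ := range_apply_subset φ hmap hpres (stair_mem_YEven hn le_rfl) ⟨p, rfl⟩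
  have := p.isLt; have := q.isLt
  simp only [stair] at hq ⊢; omega

include hrel in
theorem apply_stair_succ {a : ℕ} (ha : 1 ≤ a) (han : a + 2 ≤ n)
    (ih : φ (stair n a) = stair n a) : φ (stair n (a + 1)) = stair n (a + 1) := by
  have hu := stair_mem_YEven (n := n) (a := a + 1) (by omega) (by omega)
  have hφu := hrel (a + 1) (by omega) (by omega) _ hu _ (stair_mem_YEven ha (by omega))
    fun p => by simp only [eqm, stair, abs_le]; omega
  funext p
  obtain ⟨q, hq⟩ := range_apply_subset φ hmap hpres hu ⟨p, rfl⟩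
  have := hφu p
  simp only [ih, eqm, stair, abs_le] at this hq ⊢
  omega

include hrel in
theorem apply_stair (h1 : φ (stair n 1) = stair n 1) {a : ℕ} (ha : 1 ≤ a) (han : a ≤ n) :
    φ (stair n a) = stair n a := by
  induction a, ha using Nat.le_induction with
  | base => exact h1
  | succ a ha ih =>
    rcases (show a + 1 = n ∨ a + 2 ≤ n by omega) with rfl | hn
    · exact apply_stair_top φ hmap hpres (by omega)
    · exact apply_stair_succ φ hmap hpres hrel ha hn (ih (by omega))

theorem apply_eq_self (hstair : ∀ a, 1 ≤ a → a ≤ n → φ (stair n a) = stair n a)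
    (u : Fin n → ℤ) (hu : u ∈ YEven n) : φ u = u := by
  induction hM : ∑ p, ((n : ℤ) - u p).toNat using Nat.strong_induction_on generalizing u with
  | _ M ih =>
  by_cases hclosed : ∀ i : ℕ, i ≤ n → (i : ℤ) - 1 ∈ Set.range u →
      (i : ℤ) ∈ Set.range u
  · obtain ⟨a, ha, han, rfl⟩ := YEven.exists_eq_stair hu hclosed
    exact hstair a ha han
  push Not at hclosed
  obtain ⟨i, hin, ⟨p₀, hp₀⟩, hui⟩ := hclosed
  have hi : 2 ≤ i := by have := YEven.one_le_apply hu p₀; omega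
  refine apply_eq_of_apply_comp_fEFun φ hmap hpres hu hi hin hui
    (ih _ ?_ _ (YEven.comp_fEFun hu hi hin hui) rfl)
  have hf : ∀ p, fEFun i (u p) = if u p = i - 1 then (i : ℤ) else u p := fun p => by
    have := YEven.one_le_apply hu p; unfold fEFun; split_ifs <;> omega
  rw [← hM]
  apply Finset.sum_lt_sum
  · intro p _
    have := YEven.apply_le hu p
    simp only [Function.comp_apply, hf]; split_ifs <;> omega
  · refine ⟨p₀, Finset.mem_univ _, ?_⟩
    simp only [Function.comp_apply, hf, if_pos hp₀]
    omega

end Equivariant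

theorem stmt17_general (n : ℕ)
    (φ : (Fin n → ℤ) → (Fin n → ℤ))
    (hmap : ∀ u ∈ YEven n, φ u ∈ YEven n)
    (hpres : ∀ e ∈ MapsEven n, ∀ u ∈ YEven n, (∀ p, u p ∈ e.1) →
      (∀ p, φ u p ∈ e.1) ∧ φ (fun p => e.2 (u p)) = fun p => e.2 (φ u p))
    (hrel : ∀ m : ℕ, 1 ≤ m → m ≤ n - 1 → ∀ u ∈ YEven n, ∀ v ∈ YEven n,
      (∀ i, eqm m (u i) (v i)) → ∀ i, eqm m (φ u i) (φ v i))
    (hsurj : ∃ u ∈ YEven n, φ u = bEven n n) :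
    ∀ u ∈ YEven n, φ u = u := by
  rw [bEven_self] at hsurj
  have h1 := apply_stair_one φ hmap hpres hsurj
  exact apply_eq_self φ hmap hpres fun a ha han => apply_stair φ hmap hpres hrel h1 ha han

theorem stmt17 (n : ℕ) (hn : 1 ≤ n)
    (φ : (Fin n → ℤ) → (Fin n → ℤ))
    (hmap : ∀ u ∈ YEven n, φ u ∈ YEven n)
    (hpres : ∀ e ∈ MapsEven n, ∀ u ∈ YEven n, (∀ p, u p ∈ e.1) →
      (∀ p, φ u p ∈ e.1) ∧ φ (fun p => e.2 (u p)) = fun p => e.2 (φ u p))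
    (hrel : ∀ m : ℕ, 1 ≤ m → m ≤ n - 1 → ∀ u ∈ YEven n, ∀ v ∈ YEven n,
      (∀ i, eqm m (u i) (v i)) → ∀ i, eqm m (φ u i) (φ v i))
    (hsurj : ∃ u ∈ YEven n, φ u = bEven n n) :
    ∀ u ∈ YEven n, φ u = u :=
  stmt17_general n φ hmap hpres hrel hsurj
end

section
/- Let n ≥ 1 and let M be the set of functions x : Y → Z_{2n} such that: for each e ∈ {f_2,…,f_n, g} and each 𝐮 ∈ Y all of whose coordinates lie in dom e, x(𝐮) ∈ dom e and x(e·𝐮) = e(x(𝐮)) (coordinatewise action); and for each m with 1 ≤ m ≤ n−1, whenever 𝐮, 𝐯 ∈ Y satisfy u_i ≈_m v_i for all i, one has x(𝐮) ≈_m x(𝐯). Then: (a) every (a_1,…,a_n) ∈ B satisfies a_k ≠ 0 and |a_k| ≤ k for 1 ≤ k ≤ n, and B is closed under the coordinatewise operations ∧, ∨, ¬, →; (b) the map t given by t(x) = (x(𝐛_1), x(𝐛_2), …, x(𝐛_n)) is a bijection from M onto B. -/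
/-- The admissibility algebra `B` for the even case, as a set of `n`-tuples
(0-based index `k` corresponds to the 1-based coordinate `a_{k+1}`). -/
def BEven (n : ℕ) : Set (Fin n → ℤ) :=
  {a | ∃ j : ℕ, 1 ≤ j ∧ j ≤ n ∧ ∃ ε : ℤ, (ε = 1 ∨ ε = -1) ∧
    (∀ k : Fin n, (k : ℕ) < j → (a k = 1 ∨ a k = -1)) ∧
    ∀ k : Fin n, j ≤ (k : ℕ) → a k = ε * (((k : ℕ) : ℤ) - (j : ℤ) + 2)}

/-- The set `M` of morphisms from `Y` to `Z_{2n}`: maps preserving the coordinatewise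
actions of `f_2, …, f_n, g` and the relations `≈_1, …, ≈_{n-1}`. -/
def MEven (n : ℕ) : Set ({u : Fin n → ℤ // u ∈ YEven n} → ℤ) :=
  {x | (∀ u : {u : Fin n → ℤ // u ∈ YEven n}, x u ∈ Zeven n) ∧
    (∀ e ∈ MapsEven n, ∀ u v : {u : Fin n → ℤ // u ∈ YEven n},
      (∀ p, u.1 p ∈ e.1) → v.1 = (fun p => e.2 (u.1 p)) → x u ∈ e.1 ∧ x v = e.2 (x u)) ∧
    ∀ m : ℕ, 1 ≤ m → m ≤ n - 1 → ∀ u v : {u : Fin n → ℤ // u ∈ YEven n},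
      (∀ i, eqm m (u.1 i) (v.1 i)) → eqm m (x u) (x v)}

open Classical in
/-- The map `t`, sending `x ∈ M` to `(x(𝐛_1), …, x(𝐛_n))`. -/
noncomputable def tEven (n : ℕ) (x : {u : Fin n → ℤ // u ∈ YEven n} → ℤ) : Fin n → ℤ :=
  fun k => if h : bEven n ((k : ℕ) + 1) ∈ YEven n then x ⟨bEven n ((k : ℕ) + 1), h⟩ else 0

/-!
Membership in `B` is a local condition: `a₁ = ±1`, and from `aₖ = ±1` the next coordinate lies
in `[-2, 2]`, while from `|aₖ| ≥ 2` it moves one unit further away from `0` (`BStep`). The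
coordinatewise operations visibly preserve this.

For `x ∈ M`, the actions of `g` and `f₂` force `x(𝐛₁) = ±1`, the action of `g` gives
`x(𝐛ₖ + 1) = x(𝐛ₖ) ± 1` away from `0`, and `𝐛ₖ + 1 ≈₂ 𝐛ₖ₊₁`; so `t x ∈ B`. Every `u ∈ Y` that is
not some `𝐛ₖ` has a value `i ≥ 2` such that `i - 1` is not a value, and lowering `i` to `i - 1`
gives `v ∈ Y` with `u = fᵢ v`; by induction on `∑ uₚ`, `x` is determined by the `x(𝐛ₖ)`.
Conversely, for `a ∈ B` pick the coordinate `q` with `𝐛ₖ₊₁(q) = |aₖ|` for all `k`; then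
`u ↦ ±u(q)`, with the sign of `a_r` where `r` is the number of coordinates of `u` after its initial
constant block, is a morphism with `t`-image `a`.
-/

open Finset

def BStep (x y : ℤ) : Prop :=
  ((x = 1 ∨ x = -1) ∧ -2 ≤ y ∧ y ≤ 2) ∨ (0 < x ∧ y = x + 1) ∨ (x < 0 ∧ y = x - 1)

section BEven

variable {n : ℕ} {a : Fin n → ℤ}

theorem BEven.ne_zero_and_abs_le (ha : a ∈ BEven n) (k : Fin n) :
    a k ≠ 0 ∧ |a k| ≤ (k : ℕ) + 1 := by
  obtain ⟨j, hj, -, ε, hε, hone, htail⟩ := ha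
  rw [abs_le]
  rcases lt_or_ge (k : ℕ) j with hk | hk
  · have := hone k hk
    omega
  · have := htail k hk
    rcases hε with rfl | rfl <;> omega

theorem BEven.bStep (ha : a ∈ BEven n) (k l : Fin n) (hkl : (l : ℕ) = k + 1) :
    BStep (a k) (a l) := by
  obtain ⟨j, hj, -, ε, hε, hone, htail⟩ := ha
  have hk := hone k
  have hl := hone l
  have hk' := htail k
  have hl' := htail l
  unfold BStep
  rcases hε with rfl | rfl <;> omega

theorem bStep_tail_eq (hstep : ∀ k l : Fin n, (l : ℕ) = k + 1 → BStep (a k) (a l)) {ε : ℤ}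
    (hε : ε = 1 ∨ ε = -1) {k₀ : Fin n} (h₀ : a k₀ = ε * 2) (k : Fin n) (hk : k₀ ≤ k) :
    a k = ε * ((k : ℕ) - k₀ + 2) := by
  obtain ⟨d, hd⟩ : ∃ d, (k : ℕ) = k₀ + d := ⟨k - k₀, by omega⟩
  induction d generalizing k with
  | zero => simp [Fin.ext (by omega : (k : ℕ) = k₀), h₀]
  | succ d ih =>
    have hprev := ih ⟨k₀ + d, by omega⟩ (Fin.le_def.2 (by simp)) rfl
    have hkd := hstep ⟨k₀ + d, by omega⟩ k (by simp [hd]; ring)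
    simp only [Nat.cast_add] at hprev
    unfold BStep at hkd
    rcases hε with rfl | rfl <;> omega

theorem mem_BEven_of_bStep (hn : 0 < n) (hne : ∀ k, a k ≠ 0)
    (hfirst : ∀ k : Fin n, (k : ℕ) = 0 → a k = 1 ∨ a k = -1)
    (hstep : ∀ k l : Fin n, (l : ℕ) = k + 1 → BStep (a k) (a l)) : a ∈ BEven n := by
  by_cases hS : ({k | a k ≠ 1 ∧ a k ≠ -1} : Finset (Fin n)).Nonempty
  · obtain ⟨k₀, hk₀, hmin⟩ := exists_min_image _ Fin.val hS
    simp only [mem_filter, mem_univ, true_and] at hk₀ hmin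
    have hone : ∀ k : Fin n, (k : ℕ) < k₀ → a k = 1 ∨ a k = -1 := fun k hk => by
      by_contra h
      exact absurd (hmin k (by tauto)) (by omega)
    have hpos : 0 < (k₀ : ℕ) := Nat.pos_of_ne_zero fun h => by have := hfirst k₀ h; omega
    obtain ⟨ε, hε, h₀⟩ : ∃ ε : ℤ, (ε = 1 ∨ ε = -1) ∧ a k₀ = ε * 2 := by
      have hprev := hone ⟨k₀ - 1, by omega⟩ (by simp; omega)
      have hk₀ := hstep ⟨k₀ - 1, by omega⟩ k₀ (by simp; omega)
      have := hne k₀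
      unfold BStep at hk₀
      rcases le_or_gt (a k₀) 0 with h | h
      · exact ⟨-1, Or.inr rfl, by omega⟩
      · exact ⟨1, Or.inl rfl, by omega⟩
    refine ⟨k₀, by omega, k₀.2.le, ε, hε, hone, fun k hk => ?_⟩
    rw [bStep_tail_eq hstep hε h₀ k (Fin.le_def.2 hk)]
  · refine ⟨n, hn, le_rfl, 1, Or.inl rfl, fun k _ => ?_, fun k hk => absurd k.2 (by omega)⟩
    by_contra h
    exact hS ⟨k, by simp; tauto⟩

variable {b : Fin n → ℤ}

theorem BEven.map₂ (f : ℤ → ℤ → ℤ) (hf₀ : ∀ x y, x ≠ 0 → y ≠ 0 → f x y ≠ 0)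
    (hf₁ : ∀ x y, (x = 1 ∨ x = -1) → (y = 1 ∨ y = -1) → f x y = 1 ∨ f x y = -1)
    (hstep : ∀ x y x' y', x ≠ 0 → y ≠ 0 → BStep x x' → BStep y y' → BStep (f x y) (f x' y'))
    (ha : a ∈ BEven n) (hb : b ∈ BEven n) : (fun k => f (a k) (b k)) ∈ BEven n := by
  have hna := fun k => (BEven.ne_zero_and_abs_le ha k).1
  have hnb := fun k => (BEven.ne_zero_and_abs_le hb k).1
  have hn : 0 < n := by obtain ⟨j, hj, hjn, -⟩ := ha; omega
  refine mem_BEven_of_bStep hn (fun k => hf₀ _ _ (hna k) (hnb k)) (fun k hk => ?_)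
    fun k l hkl => hstep _ _ _ _ (hna k) (hnb k) (BEven.bStep ha k l hkl) (BEven.bStep hb k l hkl)
  obtain ⟨ja, hja, -, -, -, honea, -⟩ := ha
  obtain ⟨jb, hjb, -, -, -, honeb, -⟩ := hb
  exact hf₁ _ _ (honea k (by omega)) (honeb k (by omega))

theorem BEven.min_max_neg_sImp_mem (ha : a ∈ BEven n) (hb : b ∈ BEven n) :
    (fun k => min (a k) (b k)) ∈ BEven n ∧ (fun k => max (a k) (b k)) ∈ BEven n ∧
      (fun k => -a k) ∈ BEven n ∧ (fun k => SImp (a k) (b k)) ∈ BEven n := by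
  refine ⟨BEven.map₂ min ?_ ?_ ?_ ha hb, BEven.map₂ max ?_ ?_ ?_ ha hb,
    BEven.map₂ (fun x _ => -x) ?_ ?_ ?_ ha hb, BEven.map₂ SImp ?_ ?_ ?_ ha hb⟩
  all_goals
    intros
    try unfold BStep at *
    try unfold SImp
    try split_ifs
    all_goals omega

end BEven

section YEven

variable {n : ℕ} {u : Fin n → ℤ}

theorem YEven.pos (hu : u ∈ YEven n) (p : Fin n) : 0 < u p := by
  obtain ⟨-, j, hj, hblock, hinc⟩ := hu
  rcases le_or_gt p j with h | h
  · rw [hblock p h]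
    exact hj
  · exact hj.trans (hinc j p le_rfl h)

theorem YEven.monotone_s18 (hu : u ∈ YEven n) : Monotone u := by
  obtain ⟨-, j, -, hblock, hinc⟩ := hu
  intro p p' hpp'
  rcases hpp'.eq_or_lt with rfl | hlt
  · exact le_rfl
  rcases le_or_gt p' j with h | h
  · rw [hblock p (hpp'.trans h), hblock p' h]
  rcases le_or_gt p j with h' | h'
  · rw [hblock p h']
    exact (hinc j p' le_rfl h).le
  · exact (hinc p p' h'.le hlt).le

theorem YEven.comp {s : Set ℤ} {φ : ℤ → ℤ} (hu : u ∈ YEven n) (hs : ∀ p, u p ∈ s)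
    (hφ : StrictMonoOn φ s) (hφu : ∀ p, φ (u p) ∈ Zeven n ∧ 0 < φ (u p)) :
    (fun p => φ (u p)) ∈ YEven n := by
  obtain ⟨-, j, -, hblock, hinc⟩ := hu
  exact ⟨fun p => (hφu p).1, j, (hφu j).2, fun p hp => congrArg φ (hblock p hp),
    fun p p' hp hpp' => hφ (hs p) (hs p') (hinc p p' hp hpp')⟩

theorem bEven_mem_YEven {k : ℕ} (hk : 1 ≤ k) (hkn : k ≤ n) : bEven n k ∈ YEven n := by
  refine ⟨fun p => ?_, ⟨n - k, by omega⟩, ?_, fun p hp => ?_, fun p p' hp hpp' => ?_⟩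
  all_goals
    simp only [Zeven, Set.mem_ofPred_eq, bEven, Fin.le_def, Fin.lt_def] at *
    omega

theorem bEven_add_one_mem_YEven {k : ℕ} (hk : 1 ≤ k) (hkn : k < n) :
    (fun p => bEven n k p + 1) ∈ YEven n :=
  YEven.comp (φ := (· + 1)) (bEven_mem_YEven hk hkn.le) (fun p => Set.mem_univ _)
    (fun _ _ _ _ h => add_lt_add_left h 1)
    fun p => by simp only [Zeven, Set.mem_ofPred_eq, bEven]; omega

theorem YEven.eq_bEven (hu : u ∈ YEven n) (hpred : ∀ p, 2 ≤ u p → ∃ p', u p' = u p - 1) :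
    ∃ k : Fin n, u = bEven n (k + 1) := by
  have hmono := YEven.monotone_s18 hu
  obtain ⟨-, j, hj, hblock, hinc⟩ := hu
  have hj1 : u j = 1 := by
    by_contra hne
    obtain ⟨p, hp⟩ := hpred j (by omega)
    rcases le_or_gt p j with h | h
    · have := hblock p h
      omega
    · have := hinc j p le_rfl h
      omega
  have htail : ∀ d : ℕ, ∀ p : Fin n, (p : ℕ) = j + d → u p = d + 1 := by
    intro d
    induction d with
    | zero => exact fun p hp => by rw [Fin.ext hp, hj1]; simp
    | succ d ih =>
      intro p hp
      have hprev := ih ⟨j + d, by omega⟩ rfl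
      have hlt := hinc ⟨j + d, by omega⟩ p (Fin.le_def.2 (by simp)) (Fin.lt_def.2 (by simp; omega))
      obtain ⟨p', hp'⟩ := hpred p (by omega)
      rcases le_or_gt p' ⟨j + d, by omega⟩ with h | h
      · have := hmono h
        push_cast
        omega
      · have := hmono (Fin.le_def.2 (by simp only [Fin.lt_def] at h; omega) : p ≤ p')
        omega
  refine ⟨⟨n - 1 - j, by omega⟩, funext fun p => ?_⟩
  rcases le_or_gt p j with h | h
  · rw [hblock p h, hj1]
    simp only [bEven, Fin.le_def] at h ⊢
    omega
  · rw [htail (p - j) p (by simp only [Fin.lt_def] at h; omega)]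
    simp only [bEven, Fin.lt_def] at h ⊢
    omega

theorem YEven.exists_fEFun_eq (hu : u ∈ YEven n) {i : ℕ} {p : Fin n} (hp : u p = i)
    (hi : 2 ≤ i) (hgap : ∀ p', u p' ≠ i - 1) :
    ∃ v ∈ YEven n, (∀ p', v p' ∈ Zeven n \ {(i : ℤ), -(i : ℤ)}) ∧
      u = (fun p' => fEFun i (v p')) ∧ ∑ p', v p' < ∑ p', u p' := by
  have hpos := YEven.pos hu
  have hbound : ∀ p', u p' ≤ n := fun p' => (hu.1 p').1.2
  set φ : ℤ → ℤ := fun a => if a = i then (i : ℤ) - 1 else a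
  refine ⟨fun p' => φ (u p'), ?_, fun p' => ?_, funext fun p' => ?_, ?_⟩
  · refine YEven.comp (s := Set.range u) hu (fun p' => ⟨p', rfl⟩) ?_ fun p' => ?_
    · rintro _ ⟨p₁, rfl⟩ _ ⟨p₂, rfl⟩ h
      have := hgap p₁
      have := hgap p₂
      simp only [φ]
      split_ifs <;> omega
    · have := hpos p'
      have := hbound p'
      simp only [φ, Zeven, Set.mem_ofPred_eq]
      split_ifs <;> omega
  · have := hpos p'
    have := hbound p'
    simp only [φ, Zeven, Set.mem_sdiff, Set.mem_ofPred_eq, Set.mem_insert_iff,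
      Set.mem_singleton_iff]
    split_ifs <;> omega
  · have := hpos p'
    have := hgap p'
    simp only [φ, fEFun]
    split_ifs <;> omega
  · refine sum_lt_sum (fun p' _ => by simp only [φ]; split_ifs <;> omega) ⟨p, mem_univ _, ?_⟩
    simp only [φ, hp, if_pos]
    omega

end YEven

section MapsEven

variable {n : ℕ} {e : Set ℤ × (ℤ → ℤ)}

theorem MapsEven.neg_mem (he : e ∈ MapsEven n) {a : ℤ} (ha : a ∈ e.1) : -a ∈ e.1 := by
  rcases he with ⟨i, -, -, rfl⟩ | rfl <;>
    simp only [Zeven, Set.mem_sdiff, Set.mem_ofPred_eq, Set.mem_insert_iff,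
      Set.mem_singleton_iff] at ha ⊢ <;> omega

theorem MapsEven.map_neg (he : e ∈ MapsEven n) {a : ℤ} (ha : a ∈ e.1) : e.2 (-a) = -e.2 a := by
  rcases he with ⟨i, hi, -, rfl⟩ | rfl
  · simp only [fEFun]
    split_ifs <;> omega
  · simp only [Zeven, Set.mem_sdiff, Set.mem_ofPred_eq] at ha
    simp only [gEFun]
    split_ifs <;> omega

theorem MapsEven.strictMonoOn (he : e ∈ MapsEven n) :
    StrictMonoOn e.2 {a | a ∈ e.1 ∧ 0 < a} := by
  rintro a ⟨ha, ha0⟩ b ⟨hb, hb0⟩ hab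
  rcases he with ⟨i, hi, -, rfl⟩ | rfl
  · simp only [Zeven, Set.mem_sdiff, Set.mem_ofPred_eq, Set.mem_insert_iff,
      Set.mem_singleton_iff] at ha hb
    simp only [fEFun]
    split_ifs <;> omega
  · simp only [gEFun, if_pos ha0, if_pos hb0]
    omega

end MapsEven

theorem Fin.card_filter_le_val {n : ℕ} (m : ℕ) : #{p : Fin n | m ≤ (p : ℕ)} = n - m := by
  have := card_filter_add_card_filter_not (s := univ) (fun p : Fin n => (p : ℕ) < m)
  simp only [Fin.card_filter_val_lt, card_univ, Fintype.card_fin, not_lt] at this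
  omega

theorem eqm_comm {m : ℕ} {a b : ℤ} : eqm m a b ↔ eqm m b a :=
  or_congr eq_comm and_comm

section BlockRank

variable {n : ℕ} [NeZero n] {u : Fin n → ℤ}

def blockRank (u : Fin n → ℤ) : Fin n :=
  ⟨#{p | u 0 < u p}, (card_lt_card (filter_ssubset.2 ⟨0, mem_univ _, lt_irrefl (u 0)⟩)).trans_eq
    (card_fin n)⟩

theorem blockRank_comp {s : Set ℤ} {φ : ℤ → ℤ} (hs : ∀ p, u p ∈ s) (hφ : StrictMonoOn φ s) :
    blockRank (fun p => φ (u p)) = blockRank u := by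
  simp only [blockRank, hφ.lt_iff_lt (hs 0) (hs _)]

theorem blockRank_bEven (k : Fin n) : blockRank (bEven n (k + 1)) = k := by
  ext
  simp only [blockRank]
  rw [filter_congr (q := fun p : Fin n => n - k ≤ (p : ℕ)) fun p _ => by
    simp only [bEven, Fin.val_zero]; omega, Fin.card_filter_le_val]
  omega

theorem YEven.le_blockRank_add (hu : u ∈ YEven n) {q : Fin n} (hq : u 0 < u q) :
    n ≤ blockRank u + q := by
  have : #{p : Fin n | (q : ℕ) ≤ p} ≤ #{p | u 0 < u p} :=
    card_le_card fun p hp => by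
      simp only [mem_filter, mem_univ, true_and] at hp ⊢
      exact hq.trans_le (YEven.monotone_s18 hu (Fin.le_def.2 hp))
  rw [Fin.card_filter_le_val] at this
  simp only [blockRank]
  omega

theorem YEven.eq_of_eqm {v : Fin n → ℤ} {m : ℕ} (hu : u ∈ YEven n)
    (huv : ∀ p, eqm m (u p) (v p)) (hm : m < u 0) : u = v := by
  funext p
  have h := huv p
  have := YEven.monotone_s18 hu (Fin.zero_le p)
  simp only [eqm, abs_le] at h
  omega

end BlockRank

section MEven

variable {n : ℕ} {x : {u : Fin n → ℤ // u ∈ YEven n} → ℤ}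

theorem tEven_apply (x : {u : Fin n → ℤ // u ∈ YEven n} → ℤ) (k : Fin n) :
    tEven n x k = x ⟨bEven n (k + 1), bEven_mem_YEven (by omega) k.2⟩ :=
  dif_pos _

theorem MEven.map_fEFun (hx : x ∈ MEven n) {i : ℕ} (hi : 2 ≤ i) (hin : i ≤ n)
    {u v : {u : Fin n → ℤ // u ∈ YEven n}} (hu : ∀ p, u.1 p ∈ Zeven n \ {(i : ℤ), -(i : ℤ)})
    (hv : v.1 = fun p => fEFun i (u.1 p)) :
    x u ∈ Zeven n \ {(i : ℤ), -(i : ℤ)} ∧ x v = fEFun i (x u) :=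
  hx.2.1 _ (Or.inl ⟨i, hi, hin, rfl⟩) u v hu hv

theorem MEven.map_gEFun (hx : x ∈ MEven n) {u v : {u : Fin n → ℤ // u ∈ YEven n}}
    (hu : ∀ p, u.1 p ∈ Zeven n \ {1, -1}) (hv : v.1 = fun p => gEFun (u.1 p)) :
    (0 < x v ∧ x u = x v + 1) ∨ (x v < 0 ∧ x u = x v - 1) := by
  obtain ⟨hxu, hxv⟩ := hx.2.1 _ (Or.inr rfl) u v hu hv
  simp only [Zeven, Set.mem_sdiff, Set.mem_ofPred_eq, Set.mem_insert_iff,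
    Set.mem_singleton_iff] at hxu
  simp only [hxv, gEFun]
  split_ifs <;> omega

theorem MEven.apply_bEven_one (hx : x ∈ MEven n) (hn : 1 ≤ n) :
    x ⟨bEven n 1, bEven_mem_YEven le_rfl hn⟩ = 1 ∨
      x ⟨bEven n 1, bEven_mem_YEven le_rfl hn⟩ = -1 := by
  have hb := hx.1 ⟨bEven n 1, bEven_mem_YEven le_rfl hn⟩
  simp only [Zeven, Set.mem_ofPred_eq] at hb
  rcases hn.eq_or_lt with rfl | hn
  · omega
  -- `f₂` fixes `x(𝐛₁)` unless it is `±1`, while `g` moves it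
  set c : {u : Fin n → ℤ // u ∈ YEven n} := ⟨_, bEven_add_one_mem_YEven le_rfl hn⟩
  have hg := MEven.map_gEFun hx (u := c) (v := ⟨bEven n 1, bEven_mem_YEven le_rfl hn.le⟩)
    (fun p => by simp only [c, Zeven, Set.mem_sdiff, Set.mem_ofPred_eq, Set.mem_insert_iff,
      Set.mem_singleton_iff, bEven]; omega)
    (funext fun p => by simp only [c, gEFun, bEven]; split_ifs <;> omega)
  have hf := MEven.map_fEFun hx (i := 2) le_rfl hn
    (u := ⟨bEven n 1, bEven_mem_YEven le_rfl hn.le⟩) (v := c)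
    (fun p => by simp only [Zeven, Set.mem_sdiff, Set.mem_ofPred_eq, Set.mem_insert_iff,
      Set.mem_singleton_iff, bEven]; omega)
    (funext fun p => by simp only [c, fEFun, bEven]; split_ifs <;> omega)
  rw [hf.2, fEFun] at hg
  split_ifs at hg <;> omega

theorem MEven.bStep_apply_bEven (hx : x ∈ MEven n) {k : ℕ} (hk : 1 ≤ k) (hkn : k < n) :
    BStep (x ⟨bEven n k, bEven_mem_YEven hk hkn.le⟩)
      (x ⟨bEven n (k + 1), bEven_mem_YEven (by omega) hkn⟩) := by
  have hb := hx.1 ⟨bEven n k, bEven_mem_YEven hk hkn.le⟩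
  have hb' := hx.1 ⟨bEven n (k + 1), bEven_mem_YEven (by omega) hkn⟩
  simp only [Zeven, Set.mem_ofPred_eq] at hb hb'
  rcases (show n = 2 ∨ 3 ≤ n by omega) with rfl | hn
  · obtain rfl : k = 1 := by omega
    have := MEven.apply_bEven_one hx (by omega)
    unfold BStep
    omega
  set c : {u : Fin n → ℤ // u ∈ YEven n} := ⟨_, bEven_add_one_mem_YEven hk hkn⟩
  have hg := MEven.map_gEFun hx (u := c) (v := ⟨bEven n k, bEven_mem_YEven hk hkn.le⟩)
    (fun p => by simp only [c, Zeven, Set.mem_sdiff, Set.mem_ofPred_eq, Set.mem_insert_iff,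
      Set.mem_singleton_iff, bEven]; omega)
    (funext fun p => by simp only [c, gEFun, bEven]; split_ifs <;> omega)
  have hc := hx.2.2 2 (by omega) (by omega) c ⟨bEven n (k + 1), bEven_mem_YEven (by omega) hkn⟩
    (fun p => by simp only [c, eqm, bEven, abs_le]; omega)
  simp only [eqm, abs_le] at hc
  unfold BStep
  omega

theorem tEven_mapsTo (hn : 0 < n) : Set.MapsTo (tEven n) (MEven n) (BEven n) := by
  intro x hx
  refine mem_BEven_of_bStep hn (fun k => ?_) (fun k hk => ?_) (fun k l hkl => ?_) <;>
    simp only [tEven_apply]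
  · exact (hx.1 _).2
  · obtain ⟨k, hk'⟩ := k
    subst hk
    exact MEven.apply_bEven_one hx hn
  · obtain ⟨k, hk⟩ := k
    obtain ⟨l, hl⟩ := l
    simp only at hkl
    subst hkl
    exact MEven.bStep_apply_bEven hx (by omega) (by omega)

theorem tEven_injOn : Set.InjOn (tEven n) (MEven n) := by
  intro x hx y hy hxy
  funext u
  induction hN : (∑ p, u.1 p).toNat using Nat.strong_induction_on generalizing u with
  | _ N ih =>
  obtain ⟨u, hu⟩ := u
  by_cases hpred : ∀ p, 2 ≤ u p → ∃ p', u p' = u p - 1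
  · obtain ⟨k, rfl⟩ := YEven.eq_bEven hu hpred
    simpa only [tEven_apply] using congrFun hxy k
  push Not at hpred
  obtain ⟨p, hp, hgap⟩ := hpred
  obtain ⟨i, hi⟩ : ∃ i : ℕ, u p = i := ⟨(u p).toNat, by omega⟩
  have hin : u p ≤ n := (hu.1 p).1.2
  obtain ⟨v, hv, hdom, rfl, hlt⟩ := YEven.exists_fEFun_eq hu hi (by omega) (by rwa [← hi])
  have hvpos : 0 < ∑ p, v p := sum_pos (fun p _ => YEven.pos hv p) ⟨p, mem_univ _⟩
  rw [(MEven.map_fEFun hx (by omega) (by omega) (u := ⟨v, hv⟩) hdom rfl).2,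
    (MEven.map_fEFun hy (by omega) (by omega) (u := ⟨v, hv⟩) hdom rfl).2,
    ih _ (hN ▸ (Int.toNat_lt_toNat (hvpos.trans hlt)).2 hlt) ⟨v, hv⟩ rfl]

end MEven

section MorphOfB

variable {n : ℕ} [NeZero n]

def morphOfB (a : Fin n → ℤ) (q : Fin n) (u : {u : Fin n → ℤ // u ∈ YEven n}) : ℤ :=
  if 0 < a (blockRank u.1) then u.1 q else -u.1 q

variable {a : Fin n → ℤ} {q : Fin n}

theorem morphOfB_mem_Zeven (u : {u : Fin n → ℤ // u ∈ YEven n}) :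
    morphOfB a q u ∈ Zeven n := by
  have : u.1 q ∈ Zeven n := u.2.1 q
  simp only [morphOfB, Zeven, Set.mem_ofPred_eq] at this ⊢
  split_ifs <;> omega

theorem morphOfB_map {e : Set ℤ × (ℤ → ℤ)} (he : e ∈ MapsEven n)
    {u v : {u : Fin n → ℤ // u ∈ YEven n}} (hu : ∀ p, u.1 p ∈ e.1)
    (hv : v.1 = fun p => e.2 (u.1 p)) :
    morphOfB a q u ∈ e.1 ∧ morphOfB a q v = e.2 (morphOfB a q u) := by
  have hrank : blockRank v.1 = blockRank u.1 := by
    rw [hv]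
    exact blockRank_comp (s := {a | a ∈ e.1 ∧ 0 < a}) (fun p => ⟨hu p, YEven.pos u.2 p⟩)
      (MapsEven.strictMonoOn he)
  simp only [morphOfB]
  rw [hrank, hv]
  split_ifs
  · exact ⟨hu q, rfl⟩
  · exact ⟨MapsEven.neg_mem he (hu q), (MapsEven.map_neg he (hu q)).symm⟩

theorem morphOfB_eqm (hsign : ∀ k l : Fin n, n ≤ k + q → n ≤ l + q → (0 < a k ↔ 0 < a l))
    (m : ℕ) {u v : {u : Fin n → ℤ // u ∈ YEven n}} (huv : ∀ p, eqm m (u.1 p) (v.1 p)) :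
    eqm m (morphOfB a q u) (morphOfB a q v) := by
  by_cases heq : u = v
  · exact Or.inl (congrArg _ heq)
  have hu0 : u.1 0 ≤ m := by
    by_contra h
    exact heq (Subtype.ext (YEven.eq_of_eqm (m := m) u.2 huv (by omega)))
  have hv0 : v.1 0 ≤ m := by
    by_contra h
    exact heq (Subtype.ext (YEven.eq_of_eqm (m := m) v.2 (fun p => eqm_comm.1 (huv p))
      (by omega))).symm
  have huq := YEven.pos u.2 q
  have hvq := YEven.pos v.2 q
  have hq := huv q
  simp only [eqm, abs_le] at hq ⊢
  by_cases hsmall : u.1 q ≤ m ∧ v.1 q ≤ m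
  · right
    simp only [morphOfB]
    split_ifs <;> omega
  -- now `u q = v q > m ≥ u 0, v 0`: `q` lies past both initial blocks, where `hsign` applies
  have hsame := hsign _ _ (YEven.le_blockRank_add u.2 (q := q) (by omega))
    (YEven.le_blockRank_add v.2 (q := q) (by omega))
  have hquv : u.1 q = v.1 q := by omega
  exact Or.inl (by simp only [morphOfB, hsame, hquv])

theorem morphOfB_mem_MEven
    (hsign : ∀ k l : Fin n, n ≤ k + q → n ≤ l + q → (0 < a k ↔ 0 < a l)) :
    morphOfB a q ∈ MEven n :=
  ⟨morphOfB_mem_Zeven, fun _ he _ _ hu hv => morphOfB_map he hu hv,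
    fun m _ _ _ _ huv => morphOfB_eqm hsign m huv⟩

theorem tEven_morphOfB (habs : ∀ k : Fin n, |a k| = bEven n (k + 1) q) :
    tEven n (morphOfB a q) = a := by
  funext k
  have hb : 0 ≤ bEven n (k + 1) q := by simp only [bEven]; omega
  have := habs k
  rw [abs_eq hb] at this
  simp only [tEven_apply, morphOfB, blockRank_bEven]
  split_ifs <;> omega

end MorphOfB

theorem BEven.exists_abs_eq_bEven {n : ℕ} {a : Fin n → ℤ} (ha : a ∈ BEven n) :
    ∃ q : Fin n, (∀ k : Fin n, |a k| = bEven n (k + 1) q) ∧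
      ∀ k l : Fin n, n ≤ k + q → n ≤ l + q → (0 < a k ↔ 0 < a l) := by
  obtain ⟨j, hj, hjn, ε, hε, hone, htail⟩ := ha
  refine ⟨⟨n - j, by omega⟩, fun k => ?_, fun k l hk hl => ?_⟩
  · have := hone k
    have := htail k
    simp only [bEven]
    rw [abs_eq (by omega)]
    rcases hε with rfl | rfl <;> omega
  · simp only at hk hl
    have := htail k (by omega)
    have := htail l (by omega)
    rcases hε with rfl | rfl <;> omega

theorem tEven_surjOn (n : ℕ) : Set.SurjOn (tEven n) (MEven n) (BEven n) := by
  intro a ha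
  obtain ⟨q, habs, hsign⟩ := BEven.exists_abs_eq_bEven ha
  have : NeZero n := NeZero.of_pos q.pos
  exact ⟨morphOfB a q, morphOfB_mem_MEven hsign, tEven_morphOfB habs⟩

theorem stmt18 (n : ℕ) (hn : 1 ≤ n) :
    (∀ a ∈ BEven n, ∀ k : Fin n, a k ≠ 0 ∧ |a k| ≤ ((k : ℕ) : ℤ) + 1) ∧
    (∀ a ∈ BEven n, ∀ b ∈ BEven n,
      (fun k => min (a k) (b k)) ∈ BEven n ∧ (fun k => max (a k) (b k)) ∈ BEven n ∧
      (fun k => -a k) ∈ BEven n ∧ (fun k => SImp (a k) (b k)) ∈ BEven n) ∧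
    Set.BijOn (tEven n) (MEven n) (BEven n) :=
  ⟨fun _ ha => BEven.ne_zero_and_abs_le ha, fun _ ha _ hb => BEven.min_max_neg_sImp_mem ha hb,
    tEven_mapsTo hn, tEven_injOn, tEven_surjOn n⟩
end

section
/- For every n ≥ 1: the set B_{2n} has exactly 3·2^n − 4 elements, and the set B_{2n+1} has exactly 5·2^n − 4 elements. -/
/-- The admissibility algebra `B` for the odd case, as a set of `(n+1)`-tuples
(0-based index `k` corresponds to the 1-based coordinate `a_{k+1}`). -/
def BOdd (n : ℕ) : Set (Fin (n + 1) → ℤ) :=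
  {a | ∃ j : ℕ, 1 ≤ j ∧ j ≤ n ∧ ∃ ε : ℤ, (ε = 1 ∨ ε = -1) ∧
    (∀ k : Fin (n + 1), (k : ℕ) < j → (a k = 1 ∨ a k = -1)) ∧
    (∀ k : Fin (n + 1), j ≤ (k : ℕ) → (k : ℕ) < n →
      a k = ε * (((k : ℕ) : ℤ) - (j : ℤ) + 2)) ∧
    (if j < n then a (Fin.last n) = a ⟨n - 1, by omega⟩
      else (a (Fin.last n) = -1 ∨ a (Fin.last n) = 0 ∨ a (Fin.last n) = 1))}

open Set

theorem encard_eq_mul_of_cons_mem_iff {α : Type*} {m : ℕ} {S : Set (Fin (m + 1) → α)}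
    {X : Set α} {T : Set (Fin m → α)} (h : ∀ x b, Fin.cons x b ∈ S ↔ x ∈ X ∧ b ∈ T) :
    S.encard = X.encard * T.encard := by
  have hS : S = Fin.consEquiv (fun _ => α) '' X ×ˢ T := by
    ext a
    rw [mem_image_equiv, ← Fin.cons_self_tail a, h]
    simp [Fin.consEquiv]
  rw [hS, (Equiv.injective _).encard_image, encard_prod]

-- The tails of the tuples of `BEven (n + 1)` and `BOdd (n + 1)` with `j = 1`.
def rampEven (n : ℕ) (ε : ℤ) : Fin n → ℤ := fun k => ε * ((k : ℤ) + 2)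

def rampOdd (n : ℕ) (ε : ℤ) : Fin (n + 1) → ℤ := fun k => ε * ((min (k : ℕ) (n - 1) : ℕ) + 2)

theorem cons_mem_BEven_iff {n : ℕ} {x : ℤ} {b : Fin n → ℤ} :
    Fin.cons x b ∈ BEven (n + 1) ↔
      x ∈ ({1, -1} : Set ℤ) ∧ b ∈ BEven n ∪ rampEven n '' {1, -1} := by
  constructor
  · rintro ⟨j, hj1, hjn, ε, hε, hpre, hpost⟩
    refine ⟨by simpa using hpre 0 (by simp; omega), ?_⟩
    obtain rfl | hj2 : j = 1 ∨ 2 ≤ j := by omega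
    · refine .inr ⟨ε, hε, funext fun k => ?_⟩
      simpa [rampEven, add_comm] using (hpost k.succ (by simp)).symm
    · refine .inl ⟨j - 1, by omega, by omega, ε, hε, fun k hk => ?_, fun k hk => ?_⟩
      · simpa using hpre k.succ (by simp; omega)
      · have h := hpost k.succ (by simp; omega)
        simp only [Fin.cons_succ, Fin.val_succ] at h
        rw [h]
        push_cast [Nat.cast_sub (by omega : 1 ≤ j)]
        ring
  · rintro ⟨hx, ⟨j, hj1, hjn, ε, hε, hpre, hpost⟩ | ⟨ε, hε, rfl⟩⟩
    · refine ⟨j + 1, by omega, by omega, ε, hε, Fin.forall_fin_succ.2 ⟨fun _ => by simpa using hx,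
        fun k hk => by simpa using hpre k (by simpa using hk)⟩,
        Fin.forall_fin_succ.2 ⟨fun h => by simp at h, fun k hk => ?_⟩⟩
      simp [hpost k (by simpa using hk)]
    · refine ⟨1, le_rfl, by omega, ε, by simpa using hε,
        Fin.forall_fin_succ.2 ⟨fun _ => by simpa using hx, fun k hk => by simp at hk⟩,
        Fin.forall_fin_succ.2 ⟨fun h => by simp at h, fun k _ => ?_⟩⟩
      simp [rampEven]

theorem eq_rampOdd {n : ℕ} (hn : 0 < n) {ε : ℤ} {b : Fin (n + 1) → ℤ}
    (hb : ∀ k : Fin (n + 1), (k : ℕ) < n → b k = ε * ((k : ℤ) + 2))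
    (hlast : b (Fin.last n) = b ⟨n - 1, by omega⟩) : b = rampOdd n ε := by
  funext k
  by_cases hk : (k : ℕ) < n
  · rw [hb k hk, rampOdd]
    congr 1
    omega
  · obtain rfl : k = Fin.last n := Fin.ext (by simp; omega)
    rw [hlast, hb _ (by simp; omega), rampOdd]
    simp only [Fin.val_last]
    congr 1
    omega

theorem cons_mem_BOdd_iff {n : ℕ} (hn : 0 < n) {x : ℤ} {b : Fin (n + 1) → ℤ} :
    Fin.cons x b ∈ BOdd (n + 1) ↔
      x ∈ ({1, -1} : Set ℤ) ∧ b ∈ BOdd n ∪ rampOdd n '' {1, -1} := by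
  have hpen : (⟨n + 1 - 1, by omega⟩ : Fin (n + 2)) = (⟨n - 1, by omega⟩ : Fin (n + 1)).succ :=
    Fin.ext (by simp; omega)
  constructor
  · rintro ⟨j, hj1, hjn, ε, hε, hpre, hpost, hlast⟩
    rw [hpen, ← Fin.succ_last, Fin.cons_succ, Fin.cons_succ] at hlast
    refine ⟨by simpa using hpre 0 (by simp; omega), ?_⟩
    obtain rfl | hj2 : j = 1 ∨ 2 ≤ j := by omega
    · rw [if_pos (by omega)] at hlast
      refine .inr ⟨ε, hε, (eq_rampOdd hn (fun k hk => ?_) hlast).symm⟩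
      simpa [add_comm] using hpost k.succ (by simp) (by simpa using hk)
    · refine .inl ⟨j - 1, by omega, by omega, ε, hε, fun k hk => ?_, fun k hk hkn => ?_, ?_⟩
      · simpa using hpre k.succ (by simp; omega)
      · have h := hpost k.succ (by simp; omega) (by simp; omega)
        simp only [Fin.cons_succ, Fin.val_succ] at h
        rw [h]
        push_cast [Nat.cast_sub (by omega : 1 ≤ j)]
        ring
      · split_ifs at hlast ⊢ <;> first | exact hlast | omega
  · rintro ⟨hx, ⟨j, hj1, hjn, ε, hε, hpre, hpost, hlast⟩ | ⟨ε, hε, rfl⟩⟩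
    · refine ⟨j + 1, by omega, by omega, ε, hε, Fin.forall_fin_succ.2 ⟨fun _ => by simpa using hx,
        fun k hk => by simpa using hpre k (by simpa using hk)⟩,
        Fin.forall_fin_succ.2 ⟨fun h => by simp at h, fun k hk hkn => ?_⟩, ?_⟩
      · simp [hpost k (by simpa using hk) (by simpa using hkn)]
      · rw [hpen, ← Fin.succ_last, Fin.cons_succ, Fin.cons_succ]
        split_ifs at hlast ⊢ <;> first | exact hlast | omega
    · refine ⟨1, le_rfl, by omega, ε, by simpa using hε,
        Fin.forall_fin_succ.2 ⟨fun _ => by simpa using hx, fun k hk => by simp at hk⟩,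
        Fin.forall_fin_succ.2 ⟨fun h => by simp at h, fun k _ hkn => ?_⟩, ?_⟩
      · simp only [Fin.cons_succ, rampOdd, Fin.val_succ] at hkn ⊢
        congr 1
        omega
      · rw [hpen, ← Fin.succ_last, Fin.cons_succ, Fin.cons_succ]
        rw [if_pos (by omega)]
        simp only [rampOdd, Fin.val_last]
        congr 1
        omega

theorem apply_zero_of_mem_BEven {n : ℕ} (hn : 0 < n) {a : Fin n → ℤ} (ha : a ∈ BEven n) :
    a ⟨0, hn⟩ = 1 ∨ a ⟨0, hn⟩ = -1 := by
  obtain ⟨j, hj1, -, -, -, hpre, -⟩ := ha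
  exact hpre _ hj1

theorem apply_zero_of_mem_BOdd {n : ℕ} {a : Fin (n + 1) → ℤ} (ha : a ∈ BOdd n) :
    a 0 = 1 ∨ a 0 = -1 := by
  obtain ⟨j, hj1, -, -, -, hpre, -⟩ := ha
  exact hpre _ hj1

theorem rampEven_injective {n : ℕ} (hn : 0 < n) : Function.Injective (rampEven n) := by
  intro ε ε' h
  simpa [rampEven] using congrFun h ⟨0, hn⟩

theorem rampOdd_injective (n : ℕ) : Function.Injective (rampOdd n) := by
  intro ε ε' h
  simpa [rampOdd] using congrFun h 0

theorem disjoint_BEven_rampEven {n : ℕ} (hn : 0 < n) :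
    Disjoint (BEven n) (rampEven n '' {1, -1}) := by
  rw [disjoint_left]
  rintro _ ha ⟨ε, hε, rfl⟩
  have := apply_zero_of_mem_BEven hn ha
  simp only [rampEven] at this
  rcases hε with rfl | rfl <;> omega

theorem disjoint_BOdd_rampOdd (n : ℕ) : Disjoint (BOdd n) (rampOdd n '' {1, -1}) := by
  rw [disjoint_left]
  rintro _ ha ⟨ε, hε, rfl⟩
  have := apply_zero_of_mem_BOdd ha
  simp only [rampOdd] at this
  rcases hε with rfl | rfl <;> simp at this

theorem encard_BEven_succ {n : ℕ} (hn : 0 < n) :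
    (BEven (n + 1)).encard = 2 * ((BEven n).encard + 2) := by
  rw [encard_eq_mul_of_cons_mem_iff fun _ _ => cons_mem_BEven_iff, encard_pair (by norm_num),
    encard_union_eq (disjoint_BEven_rampEven hn), (rampEven_injective hn).encard_image,
    encard_pair (by norm_num)]

theorem encard_BOdd_succ {n : ℕ} (hn : 0 < n) :
    (BOdd (n + 1)).encard = 2 * ((BOdd n).encard + 2) := by
  rw [encard_eq_mul_of_cons_mem_iff fun _ _ => cons_mem_BOdd_iff hn, encard_pair (by norm_num),
    encard_union_eq (disjoint_BOdd_rampOdd n), (rampOdd_injective n).encard_image,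
    encard_pair (by norm_num)]

theorem encard_BEven_one : (BEven 1).encard = 2 := by
  have h (x : ℤ) (b : Fin 0 → ℤ) :
      Fin.cons x b ∈ BEven 1 ↔ x ∈ ({1, -1} : Set ℤ) ∧ b ∈ univ := by
    rw [cons_mem_BEven_iff]
    exact and_congr_right fun _ => iff_of_true (.inr ⟨1, by simp, Subsingleton.elim _ _⟩) trivial
  rw [encard_eq_mul_of_cons_mem_iff h, encard_pair (by norm_num)]
  simp

theorem encard_BOdd_one : (BOdd 1).encard = 6 := by
  have h (x : ℤ) (b : Fin 1 → ℤ) : Fin.cons x b ∈ BOdd 1 ↔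
      x ∈ ({1, -1} : Set ℤ) ∧ b ∈ {c | c 0 ∈ ({-1, 0, 1} : Set ℤ)} := by
    constructor
    · rintro ⟨j, hj1, hjn, ε, -, hpre, -, hlast⟩
      obtain rfl : j = 1 := by omega
      rw [if_neg (lt_irrefl 1)] at hlast
      exact ⟨by simpa using hpre 0 (by simp), by simpa using hlast⟩
    · rintro ⟨hx, hb⟩
      refine ⟨1, le_rfl, le_rfl, 1, .inl rfl, fun k hk => ?_, fun k hk hk' => by omega, ?_⟩
      · obtain rfl : k = 0 := Fin.ext (by simp; omega)
        simpa using hx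
      · rw [if_neg (lt_irrefl 1)]
        simpa using hb
  have h' (y : ℤ) (c : Fin 0 → ℤ) :
      Fin.cons y c ∈ {c : Fin 1 → ℤ | c 0 ∈ ({-1, 0, 1} : Set ℤ)} ↔
        y ∈ ({-1, 0, 1} : Set ℤ) ∧ c ∈ univ := by
    simp
  rw [encard_eq_mul_of_cons_mem_iff h, encard_eq_mul_of_cons_mem_iff h',
    encard_pair (by norm_num), encard_insert_of_notMem (by norm_num), encard_pair (by norm_num)]
  norm_num

theorem encard_BEven_add_four {n : ℕ} (hn : 1 ≤ n) :
    (BEven n).encard + 4 = (3 * 2 ^ n : ℕ) := by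
  induction n, hn using Nat.le_induction with
  | base => rw [encard_BEven_one]; norm_num
  | succ n hn ih =>
    push_cast at ih ⊢
    rw [encard_BEven_succ hn, pow_succ, ← mul_assoc, ← ih]
    ring

theorem encard_BOdd_add_four {n : ℕ} (hn : 1 ≤ n) :
    (BOdd n).encard + 4 = (5 * 2 ^ n : ℕ) := by
  induction n, hn using Nat.le_induction with
  | base => rw [encard_BOdd_one]; norm_num
  | succ n hn ih =>
    push_cast at ih ⊢
    rw [encard_BOdd_succ hn, pow_succ, ← mul_assoc, ← ih]
    ring

theorem Set.ncard_eq_of_encard_add_eq {α : Type*} {s : Set α} {a b : ℕ} (h : s.encard + a = b) :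
    s.ncard = b - a := by
  have hs : s.Finite := finite_of_encard_le_coe (h ▸ le_self_add)
  rw [← hs.cast_ncard_eq] at h
  norm_cast at h
  omega

theorem stmt19 (n : ℕ) (hn : 1 ≤ n) :
    (BEven n).ncard = 3 * 2 ^ n - 4 ∧ (BOdd n).ncard = 5 * 2 ^ n - 4 :=
  ⟨ncard_eq_of_encard_add_eq (encard_BEven_add_four hn),
    ncard_eq_of_encard_add_eq (encard_BOdd_add_four hn)⟩
end
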